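/- (Binet formula for odd indices) Let α = (ab + √(a²b² + 8ab))/2 and β = (ab − √(a²b² + 8ab))/2 where a, b > 0. Then for every n ≥ 0, j_{2n+1} = (1/(ab)^n)·(α^{2n+1} − β^{2n+1})/(α − β). -/

import Mathlib

noncomputable def jj (a b : ℝ) : ℕ → ℝ
  | 0 => 0
  | 1 => 1
  | n + 2 => (if Even (n + 2) then a else b) * jj a b (n + 1) + 2 * jj a b n

/-!
As for Fibonacci numbers, every root `x` of `x² = ab·x + 2ab` satisfies
`x^(2n+1) = (ab)^n (j_{2n+1} x + 2b j_{2n})`. Subtracting this identity for the two roots `α`, `β`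
eliminates the even-indexed term and gives `α^(2n+1) - β^(2n+1) = (ab)^n j_{2n+1} (α - β)`.
-/

namespace jj

variable (a b : ℝ)

lemma two_mul_add_two (n : ℕ) :
    jj a b (2 * n + 2) = a * jj a b (2 * n + 1) + 2 * jj a b (2 * n) := by
  simp [jj, parity_simps]

lemma two_mul_add_three (n : ℕ) :
    jj a b (2 * n + 3) = b * jj a b (2 * n + 2) + 2 * jj a b (2 * n + 1) := by
  simp [jj, parity_simps]

lemma pow_two_mul_add_one_of_sq_eq {x : ℝ} (hx : x ^ 2 = a * b * x + 2 * (a * b)) (n : ℕ) :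
    x ^ (2 * n + 1) = (a * b) ^ n * (jj a b (2 * n + 1) * x + 2 * b * jj a b (2 * n)) := by
  induction n with
  | zero => simp [jj]
  | succ n ih =>
    rw [show 2 * (n + 1) + 1 = 2 * n + 3 by ring, show 2 * (n + 1) = 2 * n + 2 by ring,
      two_mul_add_three, two_mul_add_two, pow_succ, pow_succ, mul_assoc, ← sq, ih]
    linear_combination (a * b) ^ n * (jj a b (2 * n + 1) * (x + a * b) + 2 * b * jj a b (2 * n)) * hx

end jj

theorem stmt8 (a b : ℝ) (ha : 0 < a) (hb : 0 < b) (n : ℕ)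
    (α β : ℝ)
    (hα : α = (a * b + Real.sqrt (a ^ 2 * b ^ 2 + 8 * a * b)) / 2)
    (hβ : β = (a * b - Real.sqrt (a ^ 2 * b ^ 2 + 8 * a * b)) / 2) :
    jj a b (2 * n + 1) = 1 / (a * b) ^ n * ((α ^ (2 * n + 1) - β ^ (2 * n + 1)) / (α - β)) := by
  set s := Real.sqrt (a ^ 2 * b ^ 2 + 8 * a * b)
  have hab : a * b ≠ 0 := (mul_pos ha hb).ne'
  have hs : s ^ 2 = a ^ 2 * b ^ 2 + 8 * a * b := Real.sq_sqrt (by positivity)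
  have hs_pos : 0 < s := Real.sqrt_pos.mpr (by positivity)
  have hαβ : α - β ≠ 0 := by rw [hα, hβ]; intro h; linarith
  have hαsq : α ^ 2 = a * b * α + 2 * (a * b) := by rw [hα]; linear_combination hs / 4
  have hβsq : β ^ 2 = a * b * β + 2 * (a * b) := by rw [hβ]; linear_combination hs / 4
  rw [jj.pow_two_mul_add_one_of_sq_eq a b hαsq, jj.pow_two_mul_add_one_of_sq_eq a b hβsq]
  field_simp
  ring
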